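/- Let l ≥ 5 be a prime and F a field such that the l-th cyclotomic polynomial Φ_l(X) is irreducible in F[x]. If the matrices A₁ = (a₁, b₁; c₁, d₁) and A₂ = (a₂, b₂; c₂, d₂) in GL(2,F) are essentially distinct, then the polynomials Φ_l(a₁x+b₁, c₁x+d₁) and Φ_l(a₂x+b₂, c₂x+d₂) are relatively prime in F[x]. -/

import Mathlib

/-!
A common root `x` of the two polynomials in an algebraic closure gives, via the Möbius action,
roots `u = M₁ x` and `v = M₂ x` of `1 + X + ⋯ + X^(l-1)`, which are primitive `l`-th roots of unity,
so `v = u^t`. Eliminating `x` gives `v = N u` with `N = M₂ · adj M₁`, a relation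
`r u^(t+1) + s u^t - p u - q = 0` with at most four terms. The minimal polynomial of `u` is
`1 + X + ⋯ + X^(l-1)`, whose `l ≥ 5` coefficients are all equal, so this relation is trivial. Hence
either `t = 1` and `N` is scalar, or `t = l - 1` and `N` is antidiagonal: `M₂` is a multiple of `M₁`
or of `M₁` with its rows swapped.
-/

open Polynomial

/-- The homogenized cyclotomic polynomial `Φ_l(f,g) = ∑_{j=0}^{l-1} f^j g^{l-1-j}`. -/
noncomputable def PhiH {F : Type*} [Field F] (l : ℕ) (f g : Polynomial F) : Polynomial F :=
  ∑ j ∈ Finset.range l, f ^ j * g ^ (l - 1 - j)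

/-- Two (invertible) matrices `(a₁,b₁;c₁,d₁)` and `(a₂,b₂;c₂,d₂)` are *essentially distinct*
if there are no `α ∈ F*` and root of unity `μ ∈ F` with
`(a₂,b₂;c₂,d₂) = α·(μa₁,μb₁;c₁,d₁)` or `(a₂,b₂;c₂,d₂) = α·(μc₁,μd₁;a₁,b₁)`. -/
def EssDistinct {F : Type*} [Field F] (a₁ b₁ c₁ d₁ a₂ b₂ c₂ d₂ : F) : Prop :=
  ¬ ∃ (α μ : F) (k : ℕ), α ≠ 0 ∧ 0 < k ∧ μ ^ k = 1 ∧
      ((a₂ = α * (μ * a₁) ∧ b₂ = α * (μ * b₁) ∧ c₂ = α * c₁ ∧ d₂ = α * d₁) ∨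
       (a₂ = α * (μ * c₁) ∧ b₂ = α * (μ * d₁) ∧ c₂ = α * a₁ ∧ d₂ = α * b₁))

open Finset

section GeomSumX

variable {R : Type*}

theorem coeff_geom_sum_X [Semiring R] (n k : ℕ) :
    (∑ i ∈ range n, (X : R[X]) ^ i).coeff k = if k < n then 1 else 0 := by
  simp [finsetSum_coeff, coeff_X_pow]

theorem natDegree_geom_sum_X [Semiring R] [Nontrivial R] (n : ℕ) :
    (∑ i ∈ range n, (X : R[X]) ^ i).natDegree = n - 1 := by
  rcases Nat.eq_zero_or_pos n with rfl | hn
  · simp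
  refine natDegree_eq_of_le_of_coeff_ne_zero ?_ (by simp [hn])
  rw [natDegree_le_iff_coeff_eq_zero]
  intro N hN
  rw [coeff_geom_sum_X, if_neg (by omega)]

/-- Such a `p` is a scalar multiple of `1 + X + ⋯ + X^(n-1)`, whose first `n` coefficients are all
`1`. -/
theorem eq_zero_of_geom_sum_X_dvd [CommSemiring R] [Nontrivial R] {n k : ℕ} {p : R[X]}
    (hdvd : (∑ j ∈ range n, (X : R[X]) ^ j) ∣ p) (hdeg : p.natDegree < n)
    (hk : k < n) (hpk : p.coeff k = 0) : p = 0 := by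
  have hp := eq_leadingCoeff_mul_of_monic_of_dvd_of_natDegree_le (monic_geom_sum_X (by omega))
    hdvd (by rw [natDegree_geom_sum_X]; omega)
  rw [hp, coeff_C_mul, coeff_geom_sum_X, if_pos hk, mul_one] at hpk
  rw [hp, hpk, C_0, zero_mul]

end GeomSumX

theorem geom_sum₂_eq_pow_mul_geom_sum_div {K : Type*} [Field K] {x y : K} (hy : y ≠ 0) (n : ℕ) :
    ∑ i ∈ range n, x ^ i * y ^ (n - 1 - i) = y ^ (n - 1) * ∑ i ∈ range n, (x / y) ^ i := by
  rw [mul_sum]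
  refine sum_congr rfl fun i hi => ?_
  rw [pow_sub₀ y hy (by simp at hi; omega), div_pow]
  ring

section Roots

variable {F L : Type*} [Field F] [Field L] [Algebra F L]

theorem exists_aeval_geom_sum_X_eq_zero_of_aeval_PhiH_eq_zero {l : ℕ} (hl : l ≠ 0)
    {a b c d : F} (hdet : a * d - b * c ≠ 0) {x : L}
    (h : aeval x (PhiH l (C a * X + C b) (C c * X + C d)) = 0) :
    ∃ u : L, aeval u (∑ i ∈ range l, (X : F[X]) ^ i) = 0 ∧
      u * (algebraMap F L c * x + algebraMap F L d) = algebraMap F L a * x + algebraMap F L b := by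
  set y := algebraMap F L a * x + algebraMap F L b
  set z := algebraMap F L c * x + algebraMap F L d
  have hsum : ∑ i ∈ range l, y ^ i * z ^ (l - 1 - i) = 0 := by simpa [PhiH] using h
  have hyz : algebraMap F L (a * d - b * c) = algebraMap F L a * z - algebraMap F L c * y := by
    simp only [y, z, map_sub, map_mul]; ring
  have hz : z ≠ 0 := by
    intro hz
    have hy := geom_sum₂_mul y z l
    rw [hsum, zero_mul, hz, zero_pow hl, sub_zero, eq_comm, pow_eq_zero_iff hl] at hy
    exact (_root_.map_ne_zero _).mpr hdet (by rw [hyz, hy, hz]; ring)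
  refine ⟨y / z, ?_, div_mul_cancel₀ y hz⟩
  rw [geom_sum₂_eq_pow_mul_geom_sum_div hz] at hsum
  simpa [hz] using hsum

variable {l : ℕ} {u : L}

theorem pow_eq_one_of_aeval_geom_sum_X_eq_zero
    (hu : aeval u (∑ i ∈ range l, (X : F[X]) ^ i) = 0) : u ^ l = 1 := by
  rw [← sub_eq_zero, ← geom_sum_mul]
  simp only [map_sum, map_pow, aeval_X] at hu
  rw [hu, zero_mul]

theorem minpoly_eq_geom_sum_X (hirr : Irreducible (∑ i ∈ range l, (X : F[X]) ^ i))
    (hu : aeval u (∑ i ∈ range l, (X : F[X]) ^ i) = 0) :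
    minpoly F u = ∑ i ∈ range l, (X : F[X]) ^ i :=
  (minpoly.eq_of_irreducible_of_monic hirr hu (monic_geom_sum_X (by rintro rfl; simp at hirr))).symm

theorem isPrimitiveRoot_of_aeval_geom_sum_X_eq_zero (hl : l.Prime) (hl2 : l ≠ 2)
    (hirr : Irreducible (∑ i ∈ range l, (X : F[X]) ^ i))
    (hu : aeval u (∑ i ∈ range l, (X : F[X]) ^ i) = 0) : IsPrimitiveRoot u l := by
  have : Fact l.Prime := ⟨hl⟩
  refine IsPrimitiveRoot.iff_orderOf.mpr
    (orderOf_eq_prime (pow_eq_one_of_aeval_geom_sum_X_eq_zero hu) ?_)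
  rintro rfl
  have := congrArg natDegree (minpoly_eq_geom_sum_X hirr hu)
  rw [minpoly.one, ← C_1, natDegree_X_sub_C, natDegree_geom_sum_X] at this
  have := hl.two_le
  omega

theorem eq_zero_of_aeval_eq_zero_of_coeff_eq_zero
    (hirr : Irreducible (∑ i ∈ range l, (X : F[X]) ^ i))
    (hu : aeval u (∑ i ∈ range l, (X : F[X]) ^ i) = 0) {P : F[X]} (hP : aeval u P = 0)
    (hdeg : P.natDegree < l) {k : ℕ} (hk : k < l) (hPk : P.coeff k = 0) : P = 0 :=
  eq_zero_of_geom_sum_X_dvd (minpoly_eq_geom_sum_X hirr hu ▸ minpoly.dvd F u hP) hdeg hk hPk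

/-- Since `l ≥ 5`, the relation `r u^(t+1) + s u^t - p u - q = 0` misses one of the exponents
`2, 3, 4` modulo `l`, so it is the trivial one: this forces `t = 1` or `t = l - 1`. -/
theorem scalar_or_antidiagonal_of_pow_mul_eq (hl5 : 5 ≤ l)
    (hirr : Irreducible (∑ i ∈ range l, (X : F[X]) ^ i))
    (hu : aeval u (∑ i ∈ range l, (X : F[X]) ^ i) = 0) {t : ℕ} (ht : t < l) {p q r s : F}
    (hdet : p * s - q * r ≠ 0)
    (h : u ^ t * (algebraMap F L r * u + algebraMap F L s) =
      algebraMap F L p * u + algebraMap F L q) :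
    (q = 0 ∧ r = 0 ∧ s = p) ∨ (p = 0 ∧ s = 0 ∧ r = q) := by
  set e := (t + 1) % l
  set P : F[X] := C r * X ^ e + C s * X ^ t - C p * X - C q
  have hcoeff (i : ℕ) : P.coeff i = (if i = e then r else 0) + (if i = t then s else 0)
      - (if i = 1 then p else 0) - (if i = 0 then q else 0) := by
    simp [P, coeff_X_pow, coeff_X, coeff_C, eq_comm]
  have he : e < l := Nat.mod_lt _ (by omega)
  have hPu : aeval u P = 0 := by
    simp only [P, map_sub, map_add, map_mul, map_pow, aeval_C, aeval_X]
    rw [← pow_eq_pow_mod _ (pow_eq_one_of_aeval_geom_sum_X_eq_zero hu)]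
    linear_combination h
  have hdeg : P.natDegree < l := by
    have : P.natDegree ≤ l - 1 := natDegree_le_iff_coeff_eq_zero.mpr fun N hN => by
      simp [hcoeff, show N ≠ e by omega, show N ≠ t by omega, show N ≠ 1 by omega,
        show N ≠ 0 by omega]
    omega
  obtain ⟨k, hk, hke, hkt⟩ : ∃ k, (2 ≤ k ∧ k ≤ 4) ∧ k ≠ e ∧ k ≠ t := by
    by_contra! hk
    have := hk 2; have := hk 3; have := hk 4
    omega
  have hP : P = 0 := eq_zero_of_aeval_eq_zero_of_coeff_eq_zero hirr hu hPu hdeg (k := k)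
    (by omega) (by simp [hcoeff, hke, hkt, show k ≠ 1 by omega, show k ≠ 0 by omega])
  have hc (i : ℕ) : (if i = e then r else 0) + (if i = t then s else 0)
      - (if i = 1 then p else 0) - (if i = 0 then q else 0) = 0 := by
    rw [← hcoeff, hP, coeff_zero]
  have c₀ := hc 0
  have c₁ := hc 1
  rcases (by omega : t = 0 ∨ t = 1 ∨ t = l - 1 ∨ (2 ≤ t ∧ t + 1 < l)) with
    rfl | rfl | rfl | ⟨ht2, htl⟩
  · have he1 : e = 1 := Nat.mod_eq_of_lt (by omega)
    simp [he1] at c₀ c₁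
    exact absurd (by linear_combination p * c₀ - q * c₁) hdet
  · have he2 : e = 2 := Nat.mod_eq_of_lt (by omega)
    have c₂ := hc 2
    simp [he2] at c₀ c₁ c₂
    exact Or.inl ⟨c₀, c₂, by linear_combination c₁⟩
  · have he0 : e = 0 := by simp [e, Nat.sub_add_cancel (by omega : 1 ≤ l)]
    have cₜ := hc (l - 1)
    simp [he0, show (0 : ℕ) ≠ l - 1 by omega, show (1 : ℕ) ≠ l - 1 by omega,
      show l - 1 ≠ 0 by omega, show l ≠ 2 by omega] at c₀ c₁ cₜ
    exact Or.inr ⟨c₁, cₜ, by linear_combination c₀⟩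
  · have het : e = t + 1 := Nat.mod_eq_of_lt htl
    simp [show (0 : ℕ) ≠ t by omega, show (1 : ℕ) ≠ t by omega, show t ≠ 0 by omega, het]
      at c₀ c₁
    exact absurd (by simp [c₀, c₁]) hdet

end Roots

/-- The coefficients are the entries of `M₂ · adj M₁`: if `u = M₁ • x` and `v = M₂ • x` as Möbius
transformations, then `v = (M₂ · adj M₁) • u`. -/
theorem mobius_adjugate_mul_eq {R : Type*} [CommRing R] {a₁ b₁ c₁ d₁ a₂ b₂ c₂ d₂ x u v : R}
    (hu : u * (c₁ * x + d₁) = a₁ * x + b₁) (hv : v * (c₂ * x + d₂) = a₂ * x + b₂) :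
    v * ((c₂ * d₁ - d₂ * c₁) * u + (d₂ * a₁ - c₂ * b₁)) =
      (a₂ * d₁ - b₂ * c₁) * u + (b₂ * a₁ - a₂ * b₁) := by
  linear_combination (c₂ * v - a₂) * hu + (a₁ - c₁ * u) * hv

theorem not_essDistinct_of_scalar_or_antidiagonal {F : Type*} [Field F]
    {a₁ b₁ c₁ d₁ a₂ b₂ c₂ d₂ : F} (hdet₁ : a₁ * d₁ - b₁ * c₁ ≠ 0) (hdet₂ : a₂ * d₂ - b₂ * c₂ ≠ 0)
    (h : (b₂ * a₁ - a₂ * b₁ = 0 ∧ c₂ * d₁ - d₂ * c₁ = 0 ∧ d₂ * a₁ - c₂ * b₁ = a₂ * d₁ - b₂ * c₁) ∨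
      (a₂ * d₁ - b₂ * c₁ = 0 ∧ d₂ * a₁ - c₂ * b₁ = 0 ∧ c₂ * d₁ - d₂ * c₁ = b₂ * a₁ - a₂ * b₁)) :
    ¬ EssDistinct a₁ b₁ c₁ d₁ a₂ b₂ c₂ d₂ := by
  have hdet : (a₁ * d₁ - b₁ * c₁) * (a₂ * d₂ - b₂ * c₂) ≠ 0 := mul_ne_zero hdet₁ hdet₂
  intro hed
  rcases h with ⟨hq, hr, hs⟩ | ⟨hp, hs, hr⟩
  · have hp : a₂ * d₁ - b₂ * c₁ ≠ 0 := fun hp => hdet (by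
      linear_combination (d₂ * a₁ - c₂ * b₁) * hp - (c₂ * d₁ - d₂ * c₁) * hq)
    refine hed ⟨(a₂ * d₁ - b₂ * c₁) / (a₁ * d₁ - b₁ * c₁), 1, 1, div_ne_zero hp hdet₁, one_pos,
      one_pow 1, Or.inl ⟨?_, ?_, ?_, ?_⟩⟩ <;>
      rw [← mul_div_right_comm, eq_div_iff hdet₁]
    · linear_combination c₁ * hq
    · linear_combination d₁ * hq
    · linear_combination a₁ * hr + c₁ * hs
    · linear_combination b₁ * hr + d₁ * hs
  · have hq : b₂ * a₁ - a₂ * b₁ ≠ 0 := fun hq => hdet (by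
      linear_combination (d₂ * a₁ - c₂ * b₁) * hp - (c₂ * d₁ - d₂ * c₁) * hq)
    refine hed ⟨(b₂ * a₁ - a₂ * b₁) / (a₁ * d₁ - b₁ * c₁), 1, 1, div_ne_zero hq hdet₁, one_pos,
      one_pow 1, Or.inr ⟨?_, ?_, ?_, ?_⟩⟩ <;>
      rw [← mul_div_right_comm, eq_div_iff hdet₁]
    · linear_combination a₁ * hp
    · linear_combination b₁ * hp
    · linear_combination c₁ * hs + a₁ * hr
    · linear_combination d₁ * hs + b₁ * hr

theorem isCoprime_PhiH_of_essDistinct {F : Type*} [Field F] (l : ℕ) (hl : l.Prime)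
    (hl5 : 5 ≤ l)
    (hirr : Irreducible (∑ i ∈ Finset.range l, (X : Polynomial F) ^ i))
    (a₁ b₁ c₁ d₁ a₂ b₂ c₂ d₂ : F)
    (hdet₁ : a₁ * d₁ - b₁ * c₁ ≠ 0) (hdet₂ : a₂ * d₂ - b₂ * c₂ ≠ 0)
    (hed : EssDistinct a₁ b₁ c₁ d₁ a₂ b₂ c₂ d₂) :
    IsCoprime (PhiH l (C a₁ * X + C b₁) (C c₁ * X + C d₁))
      (PhiH l (C a₂ * X + C b₂) (C c₂ * X + C d₂)) := by
  rw [isCoprime_iff_aeval_ne_zero_of_isAlgClosed F (AlgebraicClosure F)]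
  intro x
  by_contra! hx
  obtain ⟨u, hu, hux⟩ :=
    exists_aeval_geom_sum_X_eq_zero_of_aeval_PhiH_eq_zero hl.ne_zero hdet₁ hx.1
  obtain ⟨v, hv, hvx⟩ :=
    exists_aeval_geom_sum_X_eq_zero_of_aeval_PhiH_eq_zero hl.ne_zero hdet₂ hx.2
  have : NeZero l := ⟨hl.ne_zero⟩
  obtain ⟨t, ht, rfl⟩ := (isPrimitiveRoot_of_aeval_geom_sum_X_eq_zero hl (by omega) hirr hu
    ).eq_pow_of_pow_eq_one (pow_eq_one_of_aeval_geom_sum_X_eq_zero hv)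
  refine not_essDistinct_of_scalar_or_antidiagonal hdet₁ hdet₂
    (scalar_or_antidiagonal_of_pow_mul_eq hl5 hirr hu ht ?_ ?_) hed
  · exact fun h => mul_ne_zero hdet₁ hdet₂ (by linear_combination h)
  · simpa only [map_sub, map_mul] using mobius_adjugate_mul_eq hux hvx
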